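/- Suppose v > 0 and for each period L let E_L = 2·cosh ξ_L with ξ_L > 0 satisfy 2·cosh(L ξ_L) - v·sinh(L ξ_L)/sinh(ξ_L) = 2·cos κ for some fixed κ ∈ [0, π]. Then E_L → √(4 + v²) as L → ∞. -/

import Mathlib

/-!
Write `x_L = L ξ_L`. Since `sinh (L ξ) ≥ L sinh ξ`, the Floquet equation forces
`2 cosh x_L ≥ v L - 2`, so `cosh x_L → ∞`. Solved for `sinh ξ_L` the equation reads
`sinh ξ_L = v tanh x_L / (2 - 2 cos κ / cosh x_L)`, which tends to `v / 2`; hence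
`2 cosh ξ_L → 2 cosh (arsinh (v / 2)) = √(4 + v²)`.
-/

open Real Filter

namespace Real

theorem nat_mul_sinh_le_sinh_nat_mul (n : ℕ) {x : ℝ} (hx : 0 ≤ x) :
    n * sinh x ≤ sinh (n * x) := by
  induction n with
  | zero => simp
  | succ n ih =>
    have hsinh : 0 ≤ sinh (n * x) := sinh_nonneg_iff.mpr (by positivity)
    calc ((n + 1 : ℕ) : ℝ) * sinh x ≤ sinh (n * x) * cosh x + cosh (n * x) * sinh x := by
          push_cast
          nlinarith [one_le_cosh x, one_le_cosh (n * x), sinh_nonneg_iff.mpr hx]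
      _ = sinh ((n + 1 : ℕ) * x) := by push_cast; rw [add_mul, one_mul, sinh_add]

theorem one_sub_inv_cosh_le_tanh {x : ℝ} (hx : 0 ≤ x) : 1 - (cosh x)⁻¹ ≤ tanh x := by
  have hexp : exp (-x) ≤ 1 := exp_le_one_iff.mpr (neg_nonpos.mpr hx)
  have := cosh_sub_sinh x
  rw [tanh_eq_sinh_div_cosh, le_div_iff₀ (cosh_pos x), sub_mul,
    inv_mul_cancel₀ (cosh_pos x).ne']
  linarith

theorem tendsto_tanh_one_of_tendsto_cosh_atTop {α : Type*} {l : Filter α} {f : α → ℝ}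
    (hf : Tendsto (fun a => cosh (f a)) l atTop) (hf₀ : ∀ᶠ a in l, 0 ≤ f a) :
    Tendsto (fun a => tanh (f a)) l (nhds 1) := by
  have hlower : Tendsto (fun a => 1 - (cosh (f a))⁻¹) l (nhds 1) := by
    simpa using tendsto_const_nhds.sub hf.inv_tendsto_atTop
  exact tendsto_of_tendsto_of_tendsto_of_le_of_le' hlower tendsto_const_nhds
    (hf₀.mono fun a ha => one_sub_inv_cosh_le_tanh ha)
    (Eventually.of_forall fun a => (tanh_lt_one _).le)

end Real

theorem sinh_eq_mul_tanh_div_of_floquet {v c x ξ : ℝ} (hξ : sinh ξ ≠ 0) (hc : c < cosh x)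
    (h : 2 * cosh x - v * sinh x / sinh ξ = 2 * c) :
    sinh ξ = v * tanh x / (2 - 2 * c / cosh x) := by
  have hcosh := cosh_pos x
  have hden : 2 - 2 * c / cosh x ≠ 0 := by
    rw [sub_ne_zero, ne_comm, Ne, div_eq_iff hcosh.ne']
    linarith
  rw [eq_div_iff hden, tanh_eq_sinh_div_cosh]
  field_simp at h ⊢
  linarith

theorem nat_mul_sub_two_le_two_cosh_of_floquet {v c ξ : ℝ} (L : ℕ) (hv : 0 ≤ v) (hc : -1 ≤ c)
    (hξ : 0 < ξ) (h : 2 * cosh (L * ξ) - v * sinh (L * ξ) / sinh ξ = 2 * c) :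
    v * L - 2 ≤ 2 * cosh (L * ξ) := by
  have hsinh : 0 < sinh ξ := sinh_pos_iff.mpr hξ
  have : v * L ≤ v * sinh (L * ξ) / sinh ξ := by
    rw [le_div_iff₀ hsinh, mul_assoc]
    exact mul_le_mul_of_nonneg_left (nat_mul_sinh_le_sinh_nat_mul L hξ.le) hv
  linarith

theorem floquet_eigenvalue_outside_band_limit (v : ℝ) (hv : 0 < v)
    (κ : ℝ) (ξ : ℕ → ℝ) (hξ : ∀ L, 0 < ξ L)
    (heq : ∀ L : ℕ, 1 ≤ L →
      2 * Real.cosh (L * ξ L) - v * Real.sinh (L * ξ L) / Real.sinh (ξ L)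
        = 2 * Real.cos κ) :
    Tendsto (fun L : ℕ => 2 * Real.cosh (ξ L)) atTop (nhds (Real.sqrt (4 + v ^ 2))) := by
  have hx : ∀ L : ℕ, 0 ≤ L * ξ L := fun L => mul_nonneg L.cast_nonneg (hξ L).le
  have hcosh : Tendsto (fun L : ℕ => cosh (L * ξ L)) atTop atTop := by
    have hlin : Tendsto (fun L : ℕ => (v * L - 2) / 2) atTop atTop :=
      (tendsto_atTop_add_const_right _ _
        (tendsto_natCast_atTop_atTop.const_mul_atTop hv)).atTop_div_const two_pos
    refine tendsto_atTop_mono' _ ?_ hlin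
    filter_upwards [eventually_ge_atTop 1] with L hL
    have := nat_mul_sub_two_le_two_cosh_of_floquet L hv.le (neg_one_le_cos κ) (hξ L) (heq L hL)
    linarith
  have htanh := tendsto_tanh_one_of_tendsto_cosh_atTop hcosh (Eventually.of_forall hx)
  have hsinh : Tendsto (fun L => sinh (ξ L)) atTop (nhds (v / 2)) := by
    have hlim := (htanh.const_mul v).div
      ((tendsto_const_nhds (x := 2)).sub ((tendsto_const_nhds (x := 2 * cos κ)).div_atTop hcosh))
      (by norm_num)
    rw [mul_one, sub_zero] at hlim
    refine hlim.congr' ?_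
    filter_upwards [eventually_ge_atTop 1] with L hL
    have hc : cos κ < cosh (L * ξ L) :=
      (cos_le_one κ).trans_lt (one_lt_cosh.mpr (by have := hξ L; positivity))
    exact (sinh_eq_mul_tanh_div_of_floquet (sinh_pos_iff.mpr (hξ L)).ne' hc (heq L hL)).symm
  have hval : 2 * cosh (arsinh (v / 2)) = √(4 + v ^ 2) := by
    rw [cosh_arsinh, show (4 + v ^ 2 : ℝ) = 2 ^ 2 * (1 + (v / 2) ^ 2) by ring,
      sqrt_mul (by positivity), sqrt_sq two_pos.le]
  rw [← hval]
  simpa using ((continuous_cosh.tendsto _).comp hsinh.arsinh).const_mul 2
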